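/- Let q be a real number with q > 0 and q ≠ 1, let k ≥ 1 and n be natural numbers, and let x_1, …, x_k be real numbers. Then Σ C_q(n; r_1,…,r_k) · ∏_{j=1}^{k} [ x_j^{n − s_j} · ∏_{i=1}^{r_j} (1 − x_j q^{i−1}) ] = 1, where the sum is over all tuples (r_1,…,r_k) of natural numbers with r_1 + ⋯ + r_k ≤ n, and s_j = r_1 + ⋯ + r_j. -/

import Mathlib

noncomputable def qNum (q : ℝ) (m : ℤ) : ℝ := (1 - q ^ m) / (1 - q)

noncomputable def qFactorial (q : ℝ) (n : ℕ) : ℝ :=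
  ∏ i ∈ Finset.range n, qNum q ((i : ℤ) + 1)

noncomputable def qFacOrd (q : ℝ) (x : ℤ) (r : ℕ) : ℝ :=
  ∏ i ∈ Finset.range r, qNum q (x - (i : ℤ))

noncomputable def qMultinomial (q : ℝ) (x : ℤ) {k : ℕ} (r : Fin k → ℕ) : ℝ :=
  qFacOrd q x (∑ j, r j) / ∏ j, qFactorial q (r j)

/-!
Write `T n r = [n choose r]_q y^(n-r) (y;q)_r`. These satisfy
`T (n+1) (r+1) = (1 - y q^r) T n r + y q^(r+1) T n (r+1)` and `T (n+1) 0 = y T n 0`: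
passing from `n` to `n+1` moves the weight at `r` to `r+1` with factor `1 - y q^r` and keeps it
with factor `y q^r`, so the total weight stays `1`. The multinomial identity follows by induction
on `k`, peeling off `r_1` via `C_q(n; r_1, …, r_k) = [n choose r_1]_q C_q(n - r_1; r_2, …, r_k)`
and using the identity for `n - r_1` and `x_2, …, x_k` on the remaining sum.

Terms with `r > n` vanish, since `[n]_{r,q}` contains the factor `[0]_q = 0`. Hence the sums may
run over any range beyond `n`, which absorbs both the truncated subtraction `n - r` and the
constraint `r_1 + ⋯ + r_k ≤ n`.
-/

open Finset

variable {q : ℝ}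

lemma qNum_ne_zero (hq : 0 < q) (hq1 : q ≠ 1) {m : ℤ} (hm : m ≠ 0) : qNum q m ≠ 0 := by
  refine div_ne_zero (sub_ne_zero.mpr fun h => hm ?_) (sub_ne_zero.mpr hq1.symm)
  exact zpow_right_injective₀ hq hq1 (by simpa using h.symm)

lemma qFactorial_ne_zero (hq : 0 < q) (hq1 : q ≠ 1) (n : ℕ) : qFactorial q n ≠ 0 :=
  prod_ne_zero_iff.mpr fun i _ => qNum_ne_zero hq hq1 (by positivity)

lemma qNum_eq_add_mul (hq : q ≠ 0) (x : ℤ) (r : ℕ) :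
    qNum q x = qNum q r + q ^ r * qNum q (x - r) := by
  have hpow : q ^ x = q ^ r * q ^ (x - r) := by
    rw [← zpow_natCast, ← zpow_add₀ hq, add_sub_cancel]
  simp only [qNum, hpow, zpow_natCast]
  ring

lemma qFactorial_succ (r : ℕ) : qFactorial q (r + 1) = qFactorial q r * qNum q ((r : ℤ) + 1) :=
  prod_range_succ _ r

lemma qFacOrd_succ (x : ℤ) (r : ℕ) : qFacOrd q x (r + 1) = qFacOrd q x r * qNum q (x - r) :=
  prod_range_succ _ r

lemma qFacOrd_add (x : ℤ) (r s : ℕ) :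
    qFacOrd q x (r + s) = qFacOrd q x r * qFacOrd q (x - r) s := by
  simp only [qFacOrd, prod_range_add, Nat.cast_add, sub_sub]

lemma qFacOrd_succ' (x : ℤ) (r : ℕ) : qFacOrd q x (r + 1) = qNum q x * qFacOrd q (x - 1) r := by
  rw [add_comm, qFacOrd_add]
  simp [qFacOrd]

lemma qFacOrd_natCast_eq_zero_of_lt {n r : ℕ} (h : n < r) : qFacOrd q n r = 0 :=
  prod_eq_zero (mem_range.mpr h) (by simp [qNum])

noncomputable def qBinomial (q : ℝ) (x : ℤ) (r : ℕ) : ℝ := qFacOrd q x r / qFactorial q r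

lemma qBinomial_zero (x : ℤ) : qBinomial q x 0 = 1 := by
  simp [qBinomial, qFacOrd, qFactorial]

lemma qBinomial_natCast_eq_zero_of_lt {n r : ℕ} (h : n < r) : qBinomial q n r = 0 := by
  rw [qBinomial, qFacOrd_natCast_eq_zero_of_lt h, zero_div]

lemma qBinomial_succ_succ (hq : 0 < q) (hq1 : q ≠ 1) (x : ℤ) (r : ℕ) :
    qBinomial q (x + 1) (r + 1) = qBinomial q x r + q ^ (r + 1) * qBinomial q x (r + 1) := by
  have hfac := qFactorial_ne_zero hq hq1 r
  have hnum : qNum q ((r : ℤ) + 1) ≠ 0 := qNum_ne_zero hq hq1 (by positivity)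
  have hsplit : qNum q (x + 1) = qNum q ((r : ℤ) + 1) + q ^ (r + 1) * qNum q (x - r) := by
    rw [qNum_eq_add_mul hq.ne' (x + 1) (r + 1), Nat.cast_succ, add_sub_add_right_eq_sub]
  rw [qBinomial, qBinomial, qBinomial, qFacOrd_succ', add_sub_cancel_right, qFacOrd_succ,
    qFactorial_succ, hsplit]
  field_simp

noncomputable def qPochhammer (y q : ℝ) (r : ℕ) : ℝ := ∏ i ∈ range r, (1 - y * q ^ i)

noncomputable def qBinomialTerm (q y : ℝ) (n r : ℕ) : ℝ :=
  qBinomial q n r * (y ^ (n - r) * qPochhammer y q r)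

lemma qBinomialTerm_zero_right (y : ℝ) (n : ℕ) : qBinomialTerm q y n 0 = y ^ n := by
  simp [qBinomialTerm, qBinomial_zero, qPochhammer]

lemma qBinomialTerm_eq_zero_of_lt (y : ℝ) {n r : ℕ} (h : n < r) : qBinomialTerm q y n r = 0 := by
  rw [qBinomialTerm, qBinomial_natCast_eq_zero_of_lt h, zero_mul]

lemma qBinomialTerm_succ_succ (hq : 0 < q) (hq1 : q ≠ 1) (y : ℝ) (n r : ℕ) :
    qBinomialTerm q y (n + 1) (r + 1) =
      (1 - y * q ^ r) * qBinomialTerm q y n r + y * q ^ (r + 1) * qBinomialTerm q y n (r + 1) := by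
  rcases lt_or_ge r n with h | h
  · have hexp : n - r = n - (r + 1) + 1 := by omega
    simp only [qBinomialTerm, Nat.cast_succ, qBinomial_succ_succ hq hq1, Nat.add_sub_add_right,
      qPochhammer, prod_range_succ, hexp, pow_succ]
    ring
  · simp only [qBinomialTerm, Nat.cast_succ, qBinomial_succ_succ hq hq1, Nat.add_sub_add_right,
      qBinomial_natCast_eq_zero_of_lt (Nat.lt_succ_of_le h), qPochhammer, prod_range_succ]
    ring

theorem sum_range_qBinomialTerm (hq : 0 < q) (hq1 : q ≠ 1) (y : ℝ) {n N : ℕ} (hN : n < N) :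
    ∑ r ∈ range N, qBinomialTerm q y n r = 1 := by
  induction n generalizing N with
  | zero =>
    rw [← sum_range_add_sum_Ico _ hN, sum_range_one, qBinomialTerm_zero_right, pow_zero,
      sum_eq_zero fun r hr => qBinomialTerm_eq_zero_of_lt y (mem_Ico.mp hr).1, add_zero]
  | succ n ih =>
    obtain ⟨M, rfl⟩ : ∃ M, N = M + 1 := ⟨N - 1, by omega⟩
    calc ∑ r ∈ range (M + 1), qBinomialTerm q y (n + 1) r
        = ∑ r ∈ range M, (1 - y * q ^ r) * qBinomialTerm q y n r
            + ∑ r ∈ range (M + 1), y * q ^ r * qBinomialTerm q y n r := by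
          rw [sum_range_succ', sum_range_succ' (fun r => y * q ^ r * qBinomialTerm q y n r)]
          simp only [qBinomialTerm_succ_succ hq hq1, sum_add_distrib, qBinomialTerm_zero_right]
          ring
      _ = ∑ r ∈ range M, qBinomialTerm q y n r := by
          rw [sum_range_succ, qBinomialTerm_eq_zero_of_lt y (by omega : n < M), mul_zero, add_zero,
            ← sum_add_distrib]
          simp only [← add_mul, sub_add_cancel, one_mul]
      _ = 1 := ih (by omega)

lemma qMultinomial_cons {k : ℕ} (x : ℤ) (a : ℕ) (t : Fin k → ℕ) :
    qMultinomial q x (Fin.cons a t) = qBinomial q x a * qMultinomial q (x - a) t := by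
  simp only [qMultinomial, qBinomial, Fin.sum_cons, qFacOrd_add, Fin.prod_univ_succ, Fin.cons_zero,
    Fin.cons_succ, mul_div_mul_comm]

lemma qMultinomial_natCast_eq_zero_of_lt {k n : ℕ} {r : Fin k → ℕ} (h : n < ∑ j, r j) :
    qMultinomial q n r = 0 := by
  rw [qMultinomial, qFacOrd_natCast_eq_zero_of_lt h, zero_div]

lemma Fin.sum_filter_le_zero {M : Type*} [AddCommMonoid M] {k : ℕ} (f : Fin (k + 1) → M) :
    ∑ i ∈ univ.filter (· ≤ (0 : Fin (k + 1))), f i = f 0 := by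
  simp [filter_eq']

lemma Fin.sum_filter_le_succ {M : Type*} [AddCommMonoid M] {k : ℕ} (f : Fin (k + 1) → M)
    (j : Fin k) :
    ∑ i ∈ univ.filter (· ≤ j.succ), f i = f 0 + ∑ i ∈ univ.filter (· ≤ j), f i.succ := by
  rw [sum_filter, sum_filter, Fin.sum_univ_succ]
  simp [Fin.succ_le_succ_iff]

noncomputable def qMultinomialTerm (q : ℝ) (n : ℕ) {k : ℕ} (x : Fin k → ℝ) (r : Fin k → ℕ) : ℝ :=
  qMultinomial q n r *
    ∏ j, x j ^ (n - ∑ i ∈ univ.filter (· ≤ j), r i) * qPochhammer (x j) q (r j)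

lemma qMultinomialTerm_cons (n : ℕ) {k : ℕ} (x : Fin (k + 1) → ℝ) (a : ℕ) (t : Fin k → ℕ) :
    qMultinomialTerm q n x (Fin.cons a t) =
      qBinomialTerm q (x 0) n a * qMultinomialTerm q (n - a) (Fin.tail x) t := by
  simp only [qMultinomialTerm, qBinomialTerm, qMultinomial_cons, Fin.prod_univ_succ, Fin.cons_zero,
    Fin.cons_succ, Fin.sum_filter_le_zero, Fin.sum_filter_le_succ, Nat.sub_add_eq, Fin.tail]
  rcases le_or_gt a n with h | h
  · rw [Nat.cast_sub h]
    ring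
  · simp [qBinomial_natCast_eq_zero_of_lt h]

theorem sum_qMultinomialTerm (hq : 0 < q) (hq1 : q ≠ 1) {k : ℕ} (x : Fin k → ℝ) {n N : ℕ}
    (hN : n < N) : ∑ r : Fin k → Fin N, qMultinomialTerm q n x (fun j => r j) = 1 := by
  induction k generalizing n with
  | zero => simp [qMultinomialTerm, qMultinomial, qFacOrd, qFactorial]
  | succ k ih =>
    rw [← (Fin.consEquiv fun _ => Fin N).sum_comp, Fintype.sum_prod_type]
    calc ∑ a, ∑ t, qMultinomialTerm q n x (fun j => (Fin.consEquiv (fun _ => Fin N) (a, t) j : ℕ))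
        = ∑ a : Fin N, qBinomialTerm q (x 0) n a *
            ∑ t : Fin k → Fin N, qMultinomialTerm q (n - a) (Fin.tail x) (fun j => t j) := by
          simp only [mul_sum, ← qMultinomialTerm_cons]
          exact sum_congr rfl fun a _ => sum_congr rfl fun t _ =>
            congrArg _ (Fin.comp_cons Fin.val a t)
      _ = ∑ a : Fin N, qBinomialTerm q (x 0) n a := by
          simp only [ih (Fin.tail x) ((n.sub_le _).trans_lt hN), mul_one]
      _ = 1 := by
          rw [Fin.sum_univ_eq_sum_range (qBinomialTerm q (x 0) n)]
          exact sum_range_qBinomialTerm hq hq1 (x 0) hN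

theorem qMultinomial_sum_one_general (q : ℝ) (hq : 0 < q) (hq1 : q ≠ 1)
    (k n : ℕ) (x : Fin k → ℝ) :
    ∑ r ∈ Finset.univ.filter (fun r : Fin k → Fin (n + 1) => ∑ j, (r j : ℕ) ≤ n),
      qMultinomial q (n : ℤ) (fun j => (r j : ℕ)) *
        ∏ j : Fin k,
          x j ^ (n - ∑ i' ∈ Finset.univ.filter (fun i' => i' ≤ j), (r i' : ℕ)) *
            ∏ i ∈ Finset.range (r j : ℕ), (1 - x j * q ^ i) = 1 := by
  refine (sum_filter_of_ne fun r _ hr => ?_).trans (sum_qMultinomialTerm hq hq1 x n.lt_succ_self)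
  by_contra h
  exact hr (by rw [qMultinomial_natCast_eq_zero_of_lt (not_le.mp h), zero_mul])

/-- First identity of Corollary 2.1 (q-case):
    Σ_{r, Σr_j ≤ n} C_q(n; r) ∏_j x_j^(n−s_j) ∏_{i=1}^{r_j} (1 − x_j q^(i−1)) = 1. -/
theorem qMultinomial_sum_one (q : ℝ) (hq : 0 < q) (hq1 : q ≠ 1)
    (k n : ℕ) (hk : 1 ≤ k) (x : Fin k → ℝ) :
    ∑ r ∈ Finset.univ.filter (fun r : Fin k → Fin (n + 1) => ∑ j, (r j : ℕ) ≤ n),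
      qMultinomial q (n : ℤ) (fun j => (r j : ℕ)) *
        ∏ j : Fin k,
          x j ^ (n - ∑ i' ∈ Finset.univ.filter (fun i' => i' ≤ j), (r i' : ℕ)) *
            ∏ i ∈ Finset.range (r j : ℕ), (1 - x j * q ^ i) = 1 :=
  qMultinomial_sum_one_general q hq hq1 k n x
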